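/- arXiv:2205.06815 — 4 statements merged into one kernel-verified Lean document; each statement's English description precedes it below -/
import Mathlib

section
/- Let ℓ₀ > 0 and define d : ℝ → ℝ by d(X) = (1 + |X|/ℓ₀)·exp(−|X|/ℓ₀). Then for every X ≠ 0, d is four times differentiable at X and satisfies the Euler–Lagrange equation of the fourth-order crack density functional: ℓ₀⁴·d⁗(X) − 2ℓ₀²·d″(X) + d(X) = 0. -/
/-!
On either side of the origin `|Y| = ±Y`, so near any `X ≠ 0` the profile coincides with
`(1 + sY/ℓ₀) e^{-sY/ℓ₀}` for a sign `s`. Functions `(a + bY) e^{cY}` are closed under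
differentiation, and for `(ℓ₀c)² = 1` they solve `ℓ₀⁴ d⁗ - 2ℓ₀² d'' + d = 0`, because `c` is then
a double root of the characteristic polynomial `ℓ₀⁴c⁴ - 2ℓ₀²c² + 1 = ((ℓ₀c)² - 1)²`.
-/

open Real Filter Topology

noncomputable def affineMulExp (c a b : ℝ) (Y : ℝ) : ℝ := (a + b * Y) * exp (c * Y)

theorem hasDerivAt_affineMulExp (c a b Y : ℝ) :
    HasDerivAt (affineMulExp c a b) (affineMulExp c (b + c * a) (c * b) Y) Y := by
  have hlin : HasDerivAt (fun Y => a + b * Y) b Y := by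
    simpa using ((hasDerivAt_id' Y).const_mul b).const_add a
  have hexp : HasDerivAt (fun Y => exp (c * Y)) (exp (c * Y) * c) Y := by
    simpa using ((hasDerivAt_id' Y).const_mul c).exp
  refine (hlin.fun_mul hexp).congr_deriv ?_
  simp only [affineMulExp]
  ring

theorem deriv_affineMulExp (c a b : ℝ) :
    deriv (affineMulExp c a b) = affineMulExp c (b + c * a) (c * b) :=
  funext fun Y => (hasDerivAt_affineMulExp c a b Y).deriv

theorem iteratedDeriv_affineMulExp (c a b : ℝ) (n : ℕ) :
    iteratedDeriv n (affineMulExp c a b) =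
      affineMulExp c (c ^ n * a + n * c ^ (n - 1) * b) (c ^ n * b) := by
  induction n with
  | zero => simp
  | succ n ih =>
    rw [iteratedDeriv_succ, ih, deriv_affineMulExp]
    rcases n with _ | n
    · simp [add_comm]
    · congr 1 <;> push_cast [Nat.add_sub_cancel] <;> ring

theorem affineMulExp_fourth_order_ode {l c : ℝ} (hc : (l * c) ^ 2 = 1) (a b Y : ℝ) :
    l ^ 4 * iteratedDeriv 4 (affineMulExp c a b) Y -
      2 * l ^ 2 * iteratedDeriv 2 (affineMulExp c a b) Y + affineMulExp c a b Y = 0 := by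
  simp only [iteratedDeriv_affineMulExp, affineMulExp]
  push_cast
  linear_combination
    ((l * c) ^ 2 * (a + b * Y) - (a + b * Y) + 4 * l ^ 2 * c * b) * exp (c * Y) * hc

theorem exists_abs_eventuallyEq_mul {X : ℝ} (hX : X ≠ 0) :
    ∃ s : ℝ, s ^ 2 = 1 ∧ (|·|) =ᶠ[𝓝 X] fun Y => s * Y := by
  rcases hX.lt_or_gt with hX | hX
  · refine ⟨-1, by norm_num, ?_⟩
    filter_upwards [Iio_mem_nhds hX] with Y hY
    rw [abs_of_neg hY]
    ring
  · refine ⟨1, by norm_num, ?_⟩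
    filter_upwards [Ioi_mem_nhds hX] with Y hY
    rw [abs_of_pos hY]
    ring

/-- The fourth-order phase-field profile `d(X) = (1 + |X|/ℓ₀) exp (-|X|/ℓ₀)` is
four times differentiable away from `X = 0` and satisfies the Euler–Lagrange
equation `ℓ₀⁴ d⁗ - 2 ℓ₀² d'' + d = 0` there. -/
theorem fourth_order_profile_euler_lagrange (l₀ : ℝ) (hl : 0 < l₀) (X : ℝ) (hX : X ≠ 0) :
    (∀ k < 4, DifferentiableAt ℝ
      (iteratedDeriv k (fun Y : ℝ => (1 + |Y| / l₀) * Real.exp (-|Y| / l₀))) X) ∧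
    l₀ ^ 4 * iteratedDeriv 4 (fun Y : ℝ => (1 + |Y| / l₀) * Real.exp (-|Y| / l₀)) X -
      2 * l₀ ^ 2 * iteratedDeriv 2 (fun Y : ℝ => (1 + |Y| / l₀) * Real.exp (-|Y| / l₀)) X +
      (1 + |X| / l₀) * Real.exp (-|X| / l₀) = 0 := by
  obtain ⟨s, hs, habs⟩ := exists_abs_eventuallyEq_mul hX
  have hloc : (fun Y : ℝ => (1 + |Y| / l₀) * Real.exp (-|Y| / l₀)) =ᶠ[𝓝 X]
      affineMulExp (-s / l₀) 1 (s / l₀) := by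
    filter_upwards [habs] with Y hY
    simp only [affineMulExp, hY]
    ring_nf
  have hc : (l₀ * (-s / l₀)) ^ 2 = 1 := by
    rw [mul_div_cancel₀ _ hl.ne', neg_sq, hs]
  refine ⟨fun k _ => ?_, ?_⟩
  · rw [(hloc.iteratedDeriv k).differentiableAt_iff, iteratedDeriv_affineMulExp]
    exact (hasDerivAt_affineMulExp _ _ _ X).differentiableAt
  · rw [(hloc.iteratedDeriv 4).eq_of_nhds, (hloc.iteratedDeriv 2).eq_of_nhds, hloc.eq_of_nhds]
    exact affineMulExp_fourth_order_ode hc 1 _ X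
end

section
/- Let ℓ₀ > 0 and let d(X) = (1 + |X|/ℓ₀)·exp(−|X|/ℓ₀), d′(X) = −(X/ℓ₀²)·exp(−|X|/ℓ₀), and d″(X) = (1/ℓ₀²)·(|X|/ℓ₀ − 1)·exp(−|X|/ℓ₀). Then the regularized crack surface measure of the fourth-order phase-field model equals one: ∫_ℝ (1/(4ℓ₀))·( d(X)² + 2ℓ₀²·d′(X)² + ℓ₀⁴·d″(X)² ) dX = 1. -/
/-!
With `t = X / ℓ₀` the three terms of the density add up to
`(1 / (2ℓ₀)) (1 + 2t²) e^{-2|t|}`: the cross terms `±2t` of `d²` and `ℓ₀⁴ d″²` cancel.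
Rescaling and evenness reduce the claim to `∫₀^∞ (1 + 2t²) e^{-2t} dt = 1`, which follows from
the antiderivative `-(1 + t + t²) e^{-2t}`.
-/

open MeasureTheory Real Filter Set Topology

theorem tendsto_pow_mul_exp_neg_mul_atTop_nhds_zero (n : ℕ) {b : ℝ} (hb : 0 < b) :
    Tendsto (fun t : ℝ => t ^ n * exp (-(b * t))) atTop (𝓝 0) := by
  simpa [rpow_natCast, neg_mul] using tendsto_rpow_mul_exp_neg_mul_atTop_nhds_zero n b hb

theorem hasDerivAt_neg_one_add_add_sq_mul_exp_neg_two_mul (t : ℝ) :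
    HasDerivAt (fun t => -((1 + t + t ^ 2) * exp (-(2 * t))))
      ((1 + 2 * t ^ 2) * exp (-(2 * t))) t := by
  have hpoly : HasDerivAt (fun t => 1 + t + t ^ 2) (1 + 2 * t) t := by
    simpa using ((hasDerivAt_id' t).const_add 1).fun_add ((hasDerivAt_id' t).fun_pow 2)
  have hexp : HasDerivAt (fun t => exp (-(2 * t))) (exp (-(2 * t)) * -2) t := by
    simpa using ((hasDerivAt_id' t).const_mul 2).fun_neg.exp
  exact (hpoly.fun_mul hexp).fun_neg.congr_deriv (by ring)

theorem tendsto_one_add_add_sq_mul_exp_neg_two_mul_atTop :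
    Tendsto (fun t : ℝ => (1 + t + t ^ 2) * exp (-(2 * t))) atTop (𝓝 0) := by
  have h := ((tendsto_pow_mul_exp_neg_mul_atTop_nhds_zero 0 two_pos).add
    (tendsto_pow_mul_exp_neg_mul_atTop_nhds_zero 1 two_pos)).add
    (tendsto_pow_mul_exp_neg_mul_atTop_nhds_zero 2 two_pos)
  rw [add_zero, add_zero] at h
  exact h.congr fun t => by ring

theorem integral_one_add_two_mul_sq_mul_exp_neg_two_mul_Ioi :
    ∫ t in Ioi (0 : ℝ), (1 + 2 * t ^ 2) * exp (-(2 * t)) = 1 := by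
  rw [integral_Ioi_of_hasDerivAt_of_nonneg'
    (fun t _ => hasDerivAt_neg_one_add_add_sq_mul_exp_neg_two_mul t)
    (fun t _ => by positivity) tendsto_one_add_add_sq_mul_exp_neg_two_mul_atTop.neg]
  simp

theorem integral_one_add_two_mul_sq_mul_exp_neg_two_mul_abs :
    ∫ t : ℝ, (1 + 2 * t ^ 2) * exp (-(2 * |t|)) = 2 := by
  have h := integral_comp_abs (f := fun t : ℝ => (1 + 2 * t ^ 2) * exp (-(2 * t)))
  simp only [sq_abs] at h
  rw [h, integral_one_add_two_mul_sq_mul_exp_neg_two_mul_Ioi, mul_one]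

theorem fourth_order_crack_surface_density_eq (l₀ : ℝ) (hl : 0 < l₀) (X : ℝ) :
    (1 / (4 * l₀)) *
      (((1 + |X| / l₀) * Real.exp (-|X| / l₀)) ^ 2 +
        2 * l₀ ^ 2 * ((-(X / l₀ ^ 2)) * Real.exp (-|X| / l₀)) ^ 2 +
        l₀ ^ 4 * ((1 / l₀ ^ 2) * (|X| / l₀ - 1) * Real.exp (-|X| / l₀)) ^ 2) =
      (1 / (2 * l₀)) * ((1 + 2 * (X / l₀) ^ 2) * exp (-(2 * |X / l₀|))) := by
  have hexp : exp (-|X| / l₀) ^ 2 = exp (-(2 * |X / l₀|)) := by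
    rw [← exp_nat_mul, abs_div, abs_of_pos hl]
    ring_nf
  simp only [mul_pow, hexp, div_pow]
  field_simp
  linear_combination 4 * sq_abs X

/-- The regularized crack surface measure of the fourth-order phase-field
model, evaluated on the optimal profile `d(X) = (1 + |X|/ℓ₀) exp (-|X|/ℓ₀)`,
equals one. -/
theorem fourth_order_crack_surface_measure (l₀ : ℝ) (hl : 0 < l₀) :
    ∫ X : ℝ, (1 / (4 * l₀)) *
      (((1 + |X| / l₀) * Real.exp (-|X| / l₀)) ^ 2 +
        2 * l₀ ^ 2 * ((-(X / l₀ ^ 2)) * Real.exp (-|X| / l₀)) ^ 2 +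
        l₀ ^ 4 * ((1 / l₀ ^ 2) * (|X| / l₀ - 1) * Real.exp (-|X| / l₀)) ^ 2) = 1 := by
  simp_rw [fourth_order_crack_surface_density_eq l₀ hl]
  rw [integral_const_mul,
    Measure.integral_comp_div (fun t => (1 + 2 * t ^ 2) * exp (-(2 * |t|))) l₀,
    integral_one_add_two_mul_sq_mul_exp_neg_two_mul_abs, abs_of_pos hl, smul_eq_mul]
  field_simp
end

section
/- Let ℓ₀ > 0 and let d : ℝ → ℝ be differentiable on ℝ with d(0) = 1, d(X) → 0 as X → +∞ and as X → −∞, and suppose X ↦ d(X)² and X ↦ d′(X)² are integrable on ℝ. Then the second-order crack surface functional is bounded below by one: ∫_ℝ (1/(4ℓ₀))·( d(X)² + 4ℓ₀²·d′(X)² ) dX ≥ 1. (Hence the infimum of the functional over admissible profiles is attained in the limit by the profile exp(−|X|/(2ℓ₀)), whose value is exactly 1.) -/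
/-!
Since `d²/2` vanishes at `±∞` and equals `1/2` at the origin, the fundamental theorem of calculus
gives `∫ |d d'| ≥ 1/2` on each half-line. The pointwise AM-GM inequality
`|d d'| ≤ (d² + 4ℓ₀² d'²) / (4ℓ₀)` then bounds the functional below by this integral.
-/

open MeasureTheory Filter Set Topology

section DecayingPrimitive

variable {E : Type*} [NormedAddCommGroup E] [NormedSpace ℝ E] [CompleteSpace E]
  {f f' : ℝ → E} {a : ℝ}

theorem norm_le_setIntegral_Ioi_norm_of_hasDerivAt_of_tendsto_zero
    (hderiv : ∀ x ∈ Ici a, HasDerivAt f (f' x) x) (hint : IntegrableOn f' (Ioi a))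
    (hf : Tendsto f atTop (𝓝 0)) : ‖f a‖ ≤ ∫ x in Ioi a, ‖f' x‖ :=
  calc ‖f a‖ = ‖∫ x in Ioi a, f' x‖ := by
        rw [integral_Ioi_of_hasDerivAt_of_tendsto' hderiv hint hf, zero_sub, norm_neg]
    _ ≤ ∫ x in Ioi a, ‖f' x‖ := norm_integral_le_integral_norm f'

theorem norm_le_setIntegral_Iic_norm_of_hasDerivAt_of_tendsto_zero
    (hderiv : ∀ x ∈ Iic a, HasDerivAt f (f' x) x) (hint : IntegrableOn f' (Iic a))
    (hf : Tendsto f atBot (𝓝 0)) : ‖f a‖ ≤ ∫ x in Iic a, ‖f' x‖ :=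
  calc ‖f a‖ = ‖∫ x in Iic a, f' x‖ := by
        rw [integral_Iic_of_hasDerivAt_of_tendsto' hderiv hint hf, sub_zero]
    _ ≤ ∫ x in Iic a, ‖f' x‖ := norm_integral_le_integral_norm f'

theorem two_mul_norm_le_integral_norm_of_hasDerivAt_of_tendsto_zero
    (hderiv : ∀ x, HasDerivAt f (f' x) x) (hint : Integrable f')
    (htop : Tendsto f atTop (𝓝 0)) (hbot : Tendsto f atBot (𝓝 0)) (a : ℝ) :
    2 * ‖f a‖ ≤ ∫ x, ‖f' x‖ := by
  rw [← intervalIntegral.integral_Iic_add_Ioi (b := a) hint.norm.integrableOn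
    hint.norm.integrableOn]
  linarith [norm_le_setIntegral_Iic_norm_of_hasDerivAt_of_tendsto_zero (a := a)
      (fun x _ => hderiv x) hint.integrableOn hbot,
    norm_le_setIntegral_Ioi_norm_of_hasDerivAt_of_tendsto_zero (a := a)
      (fun x _ => hderiv x) hint.integrableOn htop]

end DecayingPrimitive

/-- The density `γ_{ℓ₀}(d, d')`. -/
noncomputable def crackSurfaceDensity (l₀ d d' : ℝ) : ℝ := 1 / (4 * l₀) * (d ^ 2 + 4 * l₀ ^ 2 * d' ^ 2)

theorem abs_mul_le_crackSurfaceDensity {l₀ : ℝ} (hl : 0 < l₀) (u v : ℝ) :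
    |u * v| ≤ crackSurfaceDensity l₀ u v := by
  rw [crackSurfaceDensity, one_div, inv_mul_eq_div, le_div_iff₀ (by positivity)]
  nlinarith [sq_nonneg (|u| - 2 * l₀ * |v|), abs_mul u v, sq_abs u, sq_abs v]

/-- Lower bound for the second-order crack surface functional: any
differentiable profile with `d(0) = 1`, decaying at `±∞`, and with square
integrable value and derivative has crack surface functional at least one. -/
theorem second_order_crack_functional_lower_bound (l₀ : ℝ) (hl : 0 < l₀)
    (d : ℝ → ℝ) (hd : Differentiable ℝ d) (h0 : d 0 = 1)
    (htop : Tendsto d atTop (nhds 0)) (hbot : Tendsto d atBot (nhds 0))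
    (hi1 : Integrable (fun X : ℝ => (d X) ^ 2))
    (hi2 : Integrable (fun X : ℝ => (deriv d X) ^ 2)) :
    1 ≤ ∫ X : ℝ, (1 / (4 * l₀)) * ((d X) ^ 2 + 4 * l₀ ^ 2 * (deriv d X) ^ 2) := by
  have hderiv : ∀ x, HasDerivAt (fun x => d x ^ 2 / 2) (d x * deriv d x) x := fun x =>
    (((hd x).hasDerivAt.fun_pow 2).div_const 2).congr_deriv (by push_cast; ring)
  have hdensity : Integrable fun X => crackSurfaceDensity l₀ (d X) (deriv d X) :=
    (hi1.add (hi2.const_mul _)).const_mul _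
  have hprod : Integrable fun X => d X * deriv d X :=
    hdensity.mono' (hd.continuous.aestronglyMeasurable.mul
      (measurable_deriv d).aestronglyMeasurable)
      (ae_of_all _ fun X => abs_mul_le_crackSurfaceDensity hl _ _)
  calc 1 = 2 * ‖d 0 ^ 2 / 2‖ := by simp [h0]
    _ ≤ ∫ X, ‖d X * deriv d X‖ :=
      two_mul_norm_le_integral_norm_of_hasDerivAt_of_tendsto_zero hderiv hprod
        (by simpa using (htop.pow 2).div_const 2) (by simpa using (hbot.pow 2).div_const 2) 0
    _ ≤ ∫ X, crackSurfaceDensity l₀ (d X) (deriv d X) :=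
      integral_mono hprod.norm hdensity fun X => abs_mul_le_crackSurfaceDensity hl _ _
end

section
/- Let n ∈ ℕ, μ ∈ ℝ, and define W̄ : Matrix (Fin n) (Fin n) ℝ → ℝ by W̄(A) = (μ/2)·[ (det A)^(−1/3)·trace(A) − 3 ], using the real power x ↦ x^(−1/3) for x > 0. Then at every matrix C with det C > 0, W̄ is Fréchet differentiable with derivative H ↦ (μ/2)·(det C)^(−1/3)·[ trace(H) − (1/3)·trace(C)·trace(C⁻¹·H) ]. Equivalently, the isochoric second Piola–Kirchhoff stress S̄ = 2·∂W̄/∂C equals μ·(det C)^(−1/3)·[ I − (1/3)·trace(C)·C⁻¹ ], i.e. the derivative in direction H equals (1/2)·trace(S̄·H) whenever C is symmetric. -/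
open Matrix

attribute [local instance] Matrix.normedAddCommGroup Matrix.normedSpace

/-!
Jacobi's formula: the determinant is multilinear in the rows, so its derivative at `C` in direction
`H` is the sum over rows of the determinants with one row replaced by that of `H`, i.e. (by
cofactor expansion) `trace (adjugate C * H) = det C * trace (C⁻¹ * H)`. The chain rule for
`x ↦ x ^ (-1/3)` then gives `-(1/3) (det C)^(-1/3) trace (C⁻¹ * H)` for the derivative of the
volumetric factor, and the product rule with the linear map `trace` gives the claimed derivative.
The stress identity is linearity of the trace.
-/

namespace Matrix

theorem sum_det_updateRow_eq_trace_adjugate_mul {ι R : Type*} [Fintype ι] [DecidableEq ι]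
    [CommRing R] (C H : Matrix ι ι R) :
    ∑ i, (C.updateRow i (H i)).det = trace (C.adjugate * H) := by
  have hrow : ∀ i, (C.updateRow i (H i)).det = ∑ j, C.adjugate j i * H i j := by
    intro i
    rw [← cramer_transpose_apply, cramer_eq_adjugate_mulVec]
    simp [mulVec, dotProduct, ← adjugate_transpose, mul_comm]
  simp only [hrow, trace, diag, mul_apply]
  exact Finset.sum_comm

variable {𝕜 ι : Type*} [NontriviallyNormedField 𝕜] [Fintype ι] [DecidableEq ι]

noncomputable def detRowContinuousMultilinear :
    ContinuousMultilinearMap 𝕜 (fun _ : ι => ι → 𝕜) 𝕜 where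
  toMultilinearMap := (detRowAlternating : (ι → 𝕜) [⋀^ι]→ₗ[𝕜] 𝕜).toMultilinearMap
  cont := continuous_id.matrix_det

theorem hasFDerivAt_det [CompleteSpace 𝕜] (C : Matrix ι ι 𝕜) :
    HasFDerivAt det
      (LinearMap.toContinuousLinearMap
        ((traceLinearMap ι 𝕜 𝕜).comp (LinearMap.mulLeft 𝕜 C.adjugate))) C :=
  (detRowContinuousMultilinear.hasFDerivAt C).congr_fderiv <| ContinuousLinearMap.ext fun H =>
    (ContinuousMultilinearMap.linearDeriv_apply _ _ _).trans
      (sum_det_updateRow_eq_trace_adjugate_mul C H)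

theorem hasFDerivAt_det_rpow {C : Matrix ι ι ℝ} (hC : C.det ≠ 0) (p : ℝ) :
    HasFDerivAt (fun A : Matrix ι ι ℝ => A.det ^ p)
      ((p * C.det ^ p) • LinearMap.toContinuousLinearMap
        ((traceLinearMap ι ℝ ℝ).comp (LinearMap.mulLeft ℝ C⁻¹))) C := by
  have hadj : C.adjugate = C.det • C⁻¹ := by
    rw [inv_def, smul_smul, Ring.inverse_eq_inv', mul_inv_cancel₀ hC, one_smul]
  refine ((Real.hasDerivAt_rpow_const (Or.inl hC)).comp_hasFDerivAt C
    (hasFDerivAt_det C)).congr_fderiv <| ContinuousLinearMap.ext fun H => ?_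
  -- `change` rather than `simp`: the `•` on these maps goes through the module structure of the
  -- local normed instance, which the `smul_apply` simp lemmas do not match syntactically.
  change p * C.det ^ (p - 1) * trace (C.adjugate * H) = p * C.det ^ p * trace (C⁻¹ * H)
  rw [hadj, smul_mul, trace_smul, smul_eq_mul, Real.rpow_sub_one hC]
  field_simp

end Matrix

/-- The deviatoric (isochoric) strain energy
`W̄(C) = (μ/2)[(det C)^(-1/3) trace C - 3]` is Fréchet differentiable at every
`C` with `det C > 0`, with derivative
`H ↦ (μ/2)(det C)^(-1/3)[trace H - (1/3) trace C · trace(C⁻¹ H)]`;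
equivalently (for symmetric `C`), the derivative in direction `H` equals
`(1/2) trace(S̄ H)` with `S̄ = μ (det C)^(-1/3) (I - (1/3) trace C · C⁻¹)`. -/
theorem isochoric_energy_fderiv (n : ℕ) (μ : ℝ) (C : Matrix (Fin n) (Fin n) ℝ)
    (hC : 0 < C.det) :
    HasFDerivAt (fun A : Matrix (Fin n) (Fin n) ℝ =>
        (μ / 2) * (A.det ^ (-(1 : ℝ) / 3) * A.trace - 3))
      (LinearMap.toContinuousLinearMap
        (((μ / 2) * C.det ^ (-(1 : ℝ) / 3)) •
          (Matrix.traceLinearMap (Fin n) ℝ ℝ -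
            ((1 / 3) * C.trace) •
              ((Matrix.traceLinearMap (Fin n) ℝ ℝ).comp (LinearMap.mulLeft ℝ C⁻¹))))) C ∧
    (Cᵀ = C → ∀ H : Matrix (Fin n) (Fin n) ℝ,
      (μ / 2) * C.det ^ (-(1 : ℝ) / 3) *
          (Matrix.trace H - (1 / 3) * C.trace * Matrix.trace (C⁻¹ * H)) =
        (1 / 2) * Matrix.trace
          (((μ * C.det ^ (-(1 : ℝ) / 3)) • (1 - ((1 / 3) * C.trace) • C⁻¹)) * H)) := by
  refine ⟨?_, fun _ H => ?_⟩
  · have htrace := (traceLinearMap (Fin n) ℝ ℝ).toContinuousLinearMap.hasFDerivAt (x := C)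
    refine ((((hasFDerivAt_det_rpow hC.ne' (-1 / 3)).mul htrace).sub_const 3).const_mul
      (μ / 2)).congr_fderiv <| ContinuousLinearMap.ext fun H => ?_
    change μ / 2 * (C.det ^ (-1 / 3 : ℝ) * trace H +
        trace C * (-1 / 3 * C.det ^ (-1 / 3 : ℝ) * trace (C⁻¹ * H))) =
      μ / 2 * C.det ^ (-1 / 3 : ℝ) * (trace H - 1 / 3 * trace C * trace (C⁻¹ * H))
    ring
  · simp only [smul_mul, trace_smul, sub_mul, trace_sub, one_mul, smul_eq_mul]
    ring
end
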